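/- arXiv:2107.06413 — 6 statements merged into one kernel-verified Lean document; each statement's English description precedes it below -/
import Mathlib

section
/- Let C be a total classifier and ⊢ its induced inference relation (which is complete and consistent). Then ⊢ is cautiously monotonic if and only if it satisfies cut. (Cautious monotonicity: D ⊢ s and D ⊢ t imply D ∪ {s} ⊢ t, for atoms s being labelled examples and t any sentence; cut: D ⊢ s and D ∪ {s} ⊢ t imply D ⊢ t.) -/
/-! Since `C` is total, `D` entails `(x', C D x')` for every `x'`, so the sentences entailed by `D`
determine the function `C D`. Cautious monotonicity and cut therefore say the same thing, read in
opposite directions: adding an example that `D` already entails leaves `C D` unchanged. -/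

/-- A sentence is either an atom `(x,y)` (a labelled example) or its negation. -/
inductive Sent (X Y : Type*) where
  | pos (x : X) (y : Y)
  | neg (x : X) (y : Y)

/-- The inference relation induced by a total classifier `C`. -/
def entails {X Y : Type*} (C : Set (X × Y) → X → Y) (D : Set (X × Y)) : Sent X Y → Prop
  | .pos x y => C D x = y
  | .neg x y => C D x ≠ y

/-- Cautious monotonicity: if `D ⊢ (x,y)` and `D ⊢ s`, then `D ∪ {(x,y)} ⊢ s`
(only atoms may be added to datasets). -/
def CautiouslyMonotonic {X Y : Type*} (C : Set (X × Y) → X → Y) : Prop :=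
  ∀ (D : Set (X × Y)) (x : X) (y : Y) (s : Sent X Y),
    entails C D (.pos x y) → entails C D s → entails C (D ∪ {(x, y)}) s

/-- Cut: if `D ⊢ (x,y)` and `D ∪ {(x,y)} ⊢ s`, then `D ⊢ s`. -/
def SatisfiesCut {X Y : Type*} (C : Set (X × Y) → X → Y) : Prop :=
  ∀ (D : Set (X × Y)) (x : X) (y : Y) (s : Sent X Y),
    entails C D (.pos x y) → entails C (D ∪ {(x, y)}) s → entails C D s

def IgnoresEntailedExamples {X Y : Type*} (C : Set (X × Y) → X → Y) : Prop :=
  ∀ (D : Set (X × Y)) (x : X) (y : Y), C D x = y → C (D ∪ {(x, y)}) = C D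

theorem entails_congr {X Y : Type*} {C : Set (X × Y) → X → Y} {D D' : Set (X × Y)}
    (h : C D = C D') (s : Sent X Y) : entails C D s ↔ entails C D' s := by
  cases s <;> simp only [entails, h]

theorem cautiouslyMonotonic_iff {X Y : Type*} {C : Set (X × Y) → X → Y} :
    CautiouslyMonotonic C ↔ IgnoresEntailedExamples C :=
  ⟨fun cm D x y hxy => funext fun x' => cm D x y (.pos x' (C D x')) hxy rfl,
    fun h D x y s hxy hs => (entails_congr (h D x y hxy) s).2 hs⟩

theorem satisfiesCut_iff {X Y : Type*} {C : Set (X × Y) → X → Y} :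
    SatisfiesCut C ↔ IgnoresEntailedExamples C :=
  ⟨fun cut D x y hxy => funext fun x' =>
      (cut D x y (.pos x' (C (D ∪ {(x, y)}) x')) hxy rfl).symm,
    fun h D x y s hxy hs => (entails_congr (h D x y hxy) s).1 hs⟩

/-- For the inference relation induced by a total classifier,
cautious monotonicity holds iff cut holds. -/
theorem cautious_monotonicity_iff_cut {X Y : Type*} (C : Set (X × Y) → X → Y) :
    CautiouslyMonotonic C ↔ SatisfiesCut C :=
  cautiouslyMonotonic_iff.trans satisfiesCut_iff.symm
end

section
/- (Coinciding predictions) Let D1 and D2 be two datasets and N a characterisation. Let D_i|N = { α ∈ D_i | α_C ⪯ N }. If D1|N = D2|N, then the grounded extensions of the regular AFs mined from (D1, N) and (D2, N) are equal; in particular the AACBR-predicted outcome for N is the same given D1 and D2. -/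
open Classical

/-- A case: a characterisation together with an outcome. The two possible outcomes
`Y = {δ, δ̄}` are modelled by `Bool`. -/
abbrev Case (X : Type*) := X × Bool

/-- An argument of a mined AF: either a labelled case or the (unique) new case. -/
abbrev Arg (X : Type*) := Case X ⊕ Unit

/-- Attack between labelled cases relative to the casebase-plus-default `CB`:
`a` attacks `b` iff they have different outcomes, `a` is at least as specific as `b`,
and no case in `CB` with `a`'s outcome lies strictly between them. -/
def caseAttacks {X : Type*} [PartialOrder X] (CB : Set (Case X)) (a b : Case X) : Prop :=
  a.2 ≠ b.2 ∧ b.1 ≤ a.1 ∧ ¬ ∃ g ∈ CB, g.1 < a.1 ∧ b.1 < g.1 ∧ g.2 = a.2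

/-- The attack relation of the regular AF mined from casebase-plus-default `CB` and
new case characterisation `N`: the new case attacks exactly the irrelevant cases. -/
def attack {X : Type*} [PartialOrder X] (CB : Set (Case X)) (N : X) :
    Arg X → Arg X → Prop
  | Sum.inl a, Sum.inl b => caseAttacks CB a b
  | Sum.inr _, Sum.inl b => ¬ b.1 ≤ N
  | _, Sum.inr _ => False

/-- The arguments of the AF mined from `D` (with default argument `dflt`) and a new case. -/
def minedArgs {X : Type*} (D : Set (Case X)) (dflt : Case X) : Set (Arg X) :=
  (Sum.inl '' (insert dflt D)) ∪ {Sum.inr ()}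

/-- `E` defends `a` in `(Args, att)` iff `a ∈ Args` and every attacker of `a` in `Args`
is attacked by some member of `E`. -/
def Defends {A : Type*} (Args : Set A) (att : A → A → Prop) (E : Set A) (a : A) : Prop :=
  a ∈ Args ∧ ∀ b ∈ Args, att b a → ∃ c ∈ E, att c b

/-- Approximation sequence of the grounded extension: `G 0` is the set of unattacked
arguments, `G (i+1)` the set of arguments defended by `G i`. -/
def Gseq {A : Type*} (Args : Set A) (att : A → A → Prop) : ℕ → Set A
  | 0 => {a | a ∈ Args ∧ ∀ b ∈ Args, ¬ att b a}
  | i + 1 => {a | Defends Args att (Gseq Args att i) a}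

/-- The grounded extension. -/
def grounded {A : Type*} (Args : Set A) (att : A → A → Prop) : Set A :=
  ⋃ i, Gseq Args att i

/-- Grounded extension of the regular AF mined from `D`, default `dflt`, and new case `N`. -/
def minedGrounded {X : Type*} [PartialOrder X] (D : Set (Case X)) (dflt : Case X)
    (N : X) : Set (Arg X) :=
  grounded (minedArgs D dflt) (attack (insert dflt D) N)

/-- The AACBR-predicted outcome for `N` given `D`: the default outcome iff the default
argument is in the grounded extension, the opposite outcome otherwise. -/
noncomputable def aacbrOutcome {X : Type*} [PartialOrder X] (D : Set (Case X))
    (dflt : Case X) (N : X) : Bool :=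
  if Sum.inl dflt ∈ minedGrounded D dflt N then dflt.2 else !dflt.2

/-- A casebase is coherent iff no two of its cases share a characterisation while
having different outcomes. -/
def Coherent {X : Type*} (D : Set (Case X)) : Prop :=
  ∀ a ∈ D, ∀ b ∈ D, a.1 = b.1 → a.2 = b.2

/-!
An argument attacked by the new case can never enter the grounded extension, since the new case
is itself unattacked. The grounded extension therefore only depends on the part of the AF that
the new case does not attack, i.e. on the cases `α` with `α_C ⪯ N`, together with the attacks
among them; whether `α` attacks `β` only depends on the cases strictly below `α_C`. All of this
data coincides for `D1` and `D2`.
-/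

section Grounded

variable {A : Type*} {Args Args' : Set A} {att att' : A → A → Prop} {z : A}

theorem Gseq_subset_args (i : ℕ) : Gseq Args att i ⊆ Args := by
  cases i <;> exact fun _ h => h.1

theorem mem_Gseq_of_unattacked (hz : z ∈ Args) (hun : ∀ b ∈ Args, ¬ att b z) (i : ℕ) :
    z ∈ Gseq Args att i := by
  cases i with
  | zero => exact ⟨hz, hun⟩
  | succ i => exact ⟨hz, fun b hb h => (hun b hb h).elim⟩

theorem not_mem_Gseq_of_unattacked_attacks (hz : z ∈ Args) (hun : ∀ b ∈ Args, ¬ att b z)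
    {a : A} (ha : att z a) (i : ℕ) : a ∉ Gseq Args att i := by
  cases i with
  | zero => exact fun h => h.2 z hz ha
  | succ i =>
    intro h
    obtain ⟨c, hc, hcz⟩ := h.2 z hz ha
    exact hun c (Gseq_subset_args i hc) hcz

/-- The shift by one stage is needed: an argument unattacked in the first AF may be attacked in
the second one by an argument that only `z` defeats. -/
theorem Gseq_subset_Gseq_succ_of_agree (hz : z ∈ Args) (hz' : z ∈ Args')
    (hun : ∀ b ∈ Args, ¬ att b z) (hun' : ∀ b ∈ Args', ¬ att' b z)
    (hzatt : ∀ a, att z a ↔ att' z a)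
    (hArgs : ∀ a, ¬ att z a → (a ∈ Args ↔ a ∈ Args'))
    (hatt : ∀ a b, ¬ att z a → ¬ att z b → (att a b ↔ att' a b)) (i : ℕ) :
    Gseq Args att i ⊆ Gseq Args' att' (i + 1) := by
  have relevant : ∀ {j c}, c ∈ Gseq Args att j → ¬ att z c :=
    fun hc hzc => not_mem_Gseq_of_unattacked_attacks hz hun hzc _ hc
  induction i using Nat.strongRecOn with
  | ind i ih =>
    intro a ha
    refine ⟨(hArgs a (relevant ha)).1 (Gseq_subset_args i ha), fun b hb hba => ?_⟩
    by_cases hzb : att z b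
    · exact ⟨z, mem_Gseq_of_unattacked hz' hun' i, (hzatt b).1 hzb⟩
    have hb1 : b ∈ Args := (hArgs b hzb).2 hb
    have hba1 : att b a := (hatt b a hzb (relevant ha)).2 hba
    cases i with
    | zero => exact (ha.2 b hb1 hba1).elim
    | succ k =>
      obtain ⟨c, hc, hcb⟩ := ha.2 b hb1 hba1
      exact ⟨c, ih k k.lt_succ_self hc, (hatt c b (relevant hc) hzb).1 hcb⟩

theorem grounded_subset_of_agree (hz : z ∈ Args) (hz' : z ∈ Args')
    (hun : ∀ b ∈ Args, ¬ att b z) (hun' : ∀ b ∈ Args', ¬ att' b z)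
    (hzatt : ∀ a, att z a ↔ att' z a)
    (hArgs : ∀ a, ¬ att z a → (a ∈ Args ↔ a ∈ Args'))
    (hatt : ∀ a b, ¬ att z a → ¬ att z b → (att a b ↔ att' a b)) :
    grounded Args att ⊆ grounded Args' att' :=
  Set.iUnion_subset fun i =>
    (Gseq_subset_Gseq_succ_of_agree hz hz' hun hun' hzatt hArgs hatt i).trans
      (Set.subset_iUnion _ (i + 1))

theorem grounded_eq_of_agree (hz : z ∈ Args) (hz' : z ∈ Args')
    (hun : ∀ b ∈ Args, ¬ att b z) (hun' : ∀ b ∈ Args', ¬ att' b z)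
    (hzatt : ∀ a, att z a ↔ att' z a)
    (hArgs : ∀ a, ¬ att z a → (a ∈ Args ↔ a ∈ Args'))
    (hatt : ∀ a b, ¬ att z a → ¬ att z b → (att a b ↔ att' a b)) :
    grounded Args att = grounded Args' att' := by
  refine (grounded_subset_of_agree hz hz' hun hun' hzatt hArgs hatt).antisymm
    (grounded_subset_of_agree hz' hz hun' hun (fun a => (hzatt a).symm)
      (fun a ha => (hArgs a (mt (hzatt a).1 ha)).symm) fun a b ha hb => ?_)
  exact (hatt a b (mt (hzatt a).1 ha) (mt (hzatt b).1 hb)).symm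

end Grounded

section Mined

theorem inl_mem_minedArgs {X : Type*} {D : Set (Case X)} {dflt c : Case X} :
    Sum.inl c ∈ minedArgs D dflt ↔ c ∈ insert dflt D := by
  simp [minedArgs]

variable {X : Type*} [PartialOrder X]

theorem caseAttacks_congr {CB CB' : Set (Case X)} {a b : Case X}
    (h : ∀ g : Case X, g.1 < a.1 → (g ∈ CB ↔ g ∈ CB')) :
    caseAttacks CB a b ↔ caseAttacks CB' a b := by
  refine and_congr_right' (and_congr_right' (not_congr (exists_congr fun g => ?_)))
  exact ⟨fun ⟨hg, hlt, hrest⟩ => ⟨(h g hlt).1 hg, hlt, hrest⟩,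
    fun ⟨hg, hlt, hrest⟩ => ⟨(h g hlt).2 hg, hlt, hrest⟩⟩

theorem attack_inr_right (CB : Set (Case X)) (N : X) (b : Arg X) :
    ¬ attack CB N b (Sum.inr ()) := by
  cases b <;> exact id

theorem minedGrounded_eq_of_agree {D D' : Set (Case X)} {dflt : Case X} {N : X}
    (h : ∀ a : Case X, a.1 ≤ N → (a ∈ insert dflt D ↔ a ∈ insert dflt D')) :
    minedGrounded D dflt N = minedGrounded D' dflt N := by
  refine grounded_eq_of_agree (z := Sum.inr ()) (Or.inr rfl) (Or.inr rfl)
    (fun b _ => attack_inr_right _ N b) (fun b _ => attack_inr_right _ N b) ?_ ?_ ?_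
  · rintro (a | _) <;> rfl
  · rintro (a | ⟨⟩) ha
    · rw [inl_mem_minedArgs, inl_mem_minedArgs]
      exact h a (not_not.1 ha)
    · exact iff_of_true (Or.inr rfl) (Or.inr rfl)
  · rintro (a | ⟨⟩) (b | ⟨⟩) ha _
    · exact caseAttacks_congr fun g hg => h g (hg.le.trans (not_not.1 ha))
    all_goals rfl

end Mined

theorem coinciding_predictions_general {X : Type*} [PartialOrder X]
    (D1 D2 : Set (Case X))
    (dflt : Case X) (N : X)
    (hcore : {a ∈ D1 | a.1 ≤ N} = {a ∈ D2 | a.1 ≤ N}) :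
    minedGrounded D1 dflt N = minedGrounded D2 dflt N ∧
      aacbrOutcome D1 dflt N = aacbrOutcome D2 dflt N := by
  have hagree : ∀ a : Case X, a.1 ≤ N → (a ∈ insert dflt D1 ↔ a ∈ insert dflt D2) :=
    fun a ha => or_congr_right (by simpa [ha] using Set.ext_iff.1 hcore a)
  have hG := minedGrounded_eq_of_agree hagree
  refine ⟨hG, ?_⟩
  unfold aacbrOutcome
  rw [hG]

/-- Coinciding predictions: if two datasets agree on their cases whose characterisations
are at most as specific as `N`, then the grounded extensions of the regular AFs mined
from them (with new case `N`) are equal, and in particular the predicted outcomes for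
`N` coincide. -/
theorem coinciding_predictions {X : Type*} [PartialOrder X]
    (D1 D2 : Set (Case X)) (h1 : D1.Finite) (h2 : D2.Finite)
    (dflt : Case X) (hd : ∀ x : X, dflt.1 ≤ x) (N : X)
    (hcore : {a ∈ D1 | a.1 ≤ N} = {a ∈ D2 | a.1 ≤ N}) :
    minedGrounded D1 dflt N = minedGrounded D2 dflt N ∧
      aacbrOutcome D1 dflt N = aacbrOutcome D2 dflt N :=
  coinciding_predictions_general D1 D2 dflt N hcore
end

section
/- Let D be a coherent casebase, N1 a characterisation not in D, o1 an outcome. For every case θ = (θ_C, θ_o) in D such that (N1,?) defends θ in the AF mined from D and N1: if θ_o ≠ o1, then (N1,o1) attacks θ in the AF mined from D ∪ {(N1,o1)} (and any new case). -/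
open Classical

/-- The attacker is a minimal case with `c`'s outcome between `b` and `c`. -/
theorem exists_caseAttacks_of_finite {X : Type*} [PartialOrder X] {CB : Set (Case X)}
    (hCB : CB.Finite) {b c : Case X} (hc : c ∈ CB) (hbc : b.1 ≤ c.1) (ho : c.2 ≠ b.2) :
    ∃ a ∈ CB, a.1 ≤ c.1 ∧ caseAttacks CB a b := by
  set S : Set (Case X) := {x | x ∈ CB ∧ x.2 = c.2 ∧ b.1 ≤ x.1 ∧ x.1 ≤ c.1}
  have hSfin : S.Finite := hCB.subset fun x hx => hx.1
  obtain ⟨a, ⟨haCB, hao, hba, hac⟩, hmin⟩ :=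
    hSfin.exists_minimalFor (fun x : Case X => x.1) S ⟨c, hc, rfl, hbc, le_rfl⟩
  refine ⟨a, haCB, hac, hao ▸ ho, hba, ?_⟩
  rintro ⟨g, hgCB, hga, hbg, hgo⟩
  have hgS : g ∈ S := ⟨hgCB, hgo.trans hao, hbg.le, hga.le.trans hac⟩
  exact hga.not_ge (hmin hgS hga.le)

theorem defended_case_attacked_by_added_case_general {X : Type*} [PartialOrder X]
    (D : Set (Case X)) (hfin : D.Finite)
    (dflt : Case X)
    (N1 : X) (o1 : Bool)
    (t : Case X)
    (hdef : ∀ g ∈ minedArgs D dflt, attack (insert dflt D) N1 g (Sum.inl t) →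
      attack (insert dflt D) N1 (Sum.inr ()) g)
    (ho : t.2 ≠ o1) :
    caseAttacks (insert dflt (insert (N1, o1) D)) (N1, o1) t := by
  have htN : t.1 ≤ N1 := not_not.mp (hdef (Sum.inr ()) (Or.inr rfl))
  refine ⟨ho.symm, htN, ?_⟩
  rintro ⟨g, hgCB, hgN, htg, hgo⟩
  have hg : g ∈ insert dflt D := by
    rw [Set.insert_comm] at hgCB
    exact Set.mem_of_mem_insert_of_ne hgCB fun h => hgN.ne (congrArg Prod.fst h)
  obtain ⟨a, haCB, hag, hat⟩ :=
    exists_caseAttacks_of_finite (hfin.insert dflt) hg htg.le (hgo ▸ ho.symm)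
  -- `a` attacks `t` and is relevant to `N1`, so `(N1,?)` cannot counter-attack it
  exact hdef (Sum.inl a) (Or.inl ⟨a, haCB, rfl⟩) hat (hag.trans hgN.le)

/-- If `D` is coherent, `N1` does not appear in `D`, and the new case `(N1,?)` defends
a case `θ ∈ D` in the AF mined from `D` and `N1`, then, provided `θ`'s outcome differs
from `o1`, the case `(N1, o1)` attacks `θ` in the AF mined from `D ∪ {(N1,o1)}` (and
any new case). -/
theorem defended_case_attacked_by_added_case {X : Type*} [PartialOrder X]
    (D : Set (Case X)) (hfin : D.Finite) (hcoh : Coherent D)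
    (dflt : Case X) (hd : ∀ x : X, dflt.1 ≤ x)
    (N1 : X) (o1 : Bool) (hnew : ∀ a ∈ D, a.1 ≠ N1)
    (t : Case X) (ht : t ∈ D)
    (hdef : ∀ g ∈ minedArgs D dflt, attack (insert dflt D) N1 g (Sum.inl t) →
      attack (insert dflt D) N1 (Sum.inr ()) g)
    (ho : t.2 ≠ o1) :
    caseAttacks (insert dflt (insert (N1, o1) D)) (N1, o1) t :=
  defended_case_attacked_by_added_case_general D hfin dflt N1 o1 t hdef ho
end

section
/- Every concise subset of a dataset (w.r.t. regular AACBR inference) is coherent: if D' ⊆ D is concise w.r.t. D, then no two cases of D' share a characterisation while having different outcomes. -/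
open Classical

/-- An example is surprising w.r.t. `D'` iff without it AACBR predicts a different
outcome for its characterisation. -/
noncomputable def Surprising {X : Type*} [PartialOrder X] (dflt : Case X)
    (D' : Set (Case X)) (e : Case X) : Prop :=
  aacbrOutcome (D' \ {e}) dflt e.1 ≠ e.2

/-- An example is sufficient w.r.t. `D'` iff adding it makes AACBR predict its outcome. -/
noncomputable def Sufficient {X : Type*} [PartialOrder X] (dflt : Case X)
    (D' : Set (Case X)) (e : Case X) : Prop :=
  aacbrOutcome (insert e D') dflt e.1 = e.2

/-- An example is includable w.r.t. `D'` iff it is both surprising and sufficient. -/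
noncomputable def Includable {X : Type*} [PartialOrder X] (dflt : Case X)
    (D' : Set (Case X)) (e : Case X) : Prop :=
  Surprising dflt D' e ∧ Sufficient dflt D' e

/-- `S'` is concise w.r.t. `S` iff `S'` is exactly the set of examples of `S` that are
includable w.r.t. `S'`. -/
noncomputable def Concise {X : Type*} [PartialOrder X] (dflt : Case X)
    (S' S : Set (Case X)) : Prop :=
  S' = {e ∈ S | Includable dflt S' e}

/-! Conciseness makes every case of `D'` sufficient w.r.t. `D'` itself, i.e. `D'` predicts the
outcome of each of its own cases. A prediction depends only on the characterisation, so two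
cases of `D'` with the same characterisation have the same outcome. -/

theorem Sufficient.aacbrOutcome_eq {X : Type*} [PartialOrder X] {dflt : Case X}
    {D' : Set (Case X)} {e : Case X} (he : e ∈ D') (h : Sufficient dflt D' e) :
    aacbrOutcome D' dflt e.1 = e.2 := by
  rwa [Sufficient, Set.insert_eq_of_mem he] at h

theorem Concise.aacbrOutcome_eq {X : Type*} [PartialOrder X] {dflt : Case X}
    {D' D : Set (Case X)} (hconc : Concise dflt D' D) {e : Case X} (he : e ∈ D') :
    aacbrOutcome D' dflt e.1 = e.2 :=
  have hinc : e ∈ {e ∈ D | Includable dflt D' e} := hconc ▸ he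
  hinc.2.2.aacbrOutcome_eq he

theorem coherent_of_forall_aacbrOutcome_eq {X : Type*} [PartialOrder X] {dflt : Case X}
    {D' : Set (Case X)} (h : ∀ e ∈ D', aacbrOutcome D' dflt e.1 = e.2) : Coherent D' :=
  fun a ha b hb hab => by rw [← h a ha, ← h b hb, hab]

theorem concise_subset_coherent_general {X : Type*} [PartialOrder X]
    (D : Set (Case X)) (dflt : Case X) (D' : Set (Case X)) (hconc : Concise dflt D' D) :
    Coherent D' :=
  coherent_of_forall_aacbrOutcome_eq fun _ he => hconc.aacbrOutcome_eq he

/-- Every concise subset is coherent: if `D' ⊆ D` is concise w.r.t. `D` (for regular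
AACBR inference), then no two cases of `D'` share a characterisation while having
different outcomes. -/
theorem concise_subset_coherent {X : Type*} [PartialOrder X]
    (D : Set (Case X)) (hfin : D.Finite)
    (dflt : Case X) (hd : ∀ x : X, dflt.1 ≤ x)
    (D' : Set (Case X)) (hD' : D' ⊆ D) (hconc : Concise dflt D' D) :
    Coherent D' :=
  concise_subset_coherent_general D dflt D' hconc
end

section
/- Define cAACBR inference: D ⊢' (x,y) iff concise(D) ⊢ (x,y), where concise(D) is the unique concise subset of D (assumed to exist for all relevant datasets, with concise(D) = concise(D ∪ {(x,y)}) whenever D ⊢' (x,y) and (x,y) ∉ D). Then ⊢' is cautiously monotonic: if D ⊢' s and D ⊢' t then D ∪ {s} ⊢' t, for atoms s. -/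
/-- The cAACBR-style inference: `D ⊢' s` iff `concise D ⊢ s`. -/
def entails' {X Y : Type*} (C : Set (X × Y) → X → Y)
    (concise : Set (X × Y) → Set (X × Y)) (D : Set (X × Y)) (s : Sent X Y) : Prop :=
  entails C (concise D) s

theorem concise_union_singleton_eq {X Y : Type*}
    {C : Set (X × Y) → X → Y} {concise : Set (X × Y) → Set (X × Y)}
    (hstab : ∀ (D : Set (X × Y)) (x : X) (y : Y),
      entails' C concise D (.pos x y) → (x, y) ∉ D → concise (D ∪ {(x, y)}) = concise D)
    {D : Set (X × Y)} {x : X} {y : Y} (h : entails' C concise D (.pos x y)) :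
    concise (D ∪ {(x, y)}) = concise D := by
  by_cases hmem : (x, y) ∈ D
  · rw [Set.union_singleton, Set.insert_eq_of_mem hmem]
  · exact hstab D x y h hmem

theorem caacbr_cautiously_monotonic_general {X Y : Type*}
    (C : Set (X × Y) → X → Y) (concise : Set (X × Y) → Set (X × Y))
    (hstab : ∀ (D : Set (X × Y)) (x : X) (y : Y),
      entails' C concise D (.pos x y) → (x, y) ∉ D → concise (D ∪ {(x, y)}) = concise D)
    (D : Set (X × Y)) (x : X) (y : Y) (s : Sent X Y)
    (h1 : entails' C concise D (.pos x y)) (h2 : entails' C concise D s) :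
    entails' C concise (D ∪ {(x, y)}) s := by
  rw [entails', concise_union_singleton_eq hstab h1]
  exact h2

/-- cAACBR inference is cautiously monotonic: given a `concise` operator on datasets
satisfying `concise (D ∪ {(x,y)}) = concise D` whenever `D ⊢' (x,y)` and `(x,y) ∉ D`,
the relation `D ⊢' s` iff `concise D ⊢ s` satisfies: if `D ⊢' (x,y)` and `D ⊢' s`,
then `D ∪ {(x,y)} ⊢' s`. -/
theorem caacbr_cautiously_monotonic {X Y : Type*}
    (C : Set (X × Y) → X → Y) (concise : Set (X × Y) → Set (X × Y))
    (hsub : ∀ D : Set (X × Y), concise D ⊆ D)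
    (hstab : ∀ (D : Set (X × Y)) (x : X) (y : Y),
      entails' C concise D (.pos x y) → (x, y) ∉ D → concise (D ∪ {(x, y)}) = concise D)
    (D : Set (X × Y)) (x : X) (y : Y) (s : Sent X Y)
    (h1 : entails' C concise D (.pos x y)) (h2 : entails' C concise D s) :
    entails' C concise (D ∪ {(x, y)}) s :=
  caacbr_cautiously_monotonic_general C concise hstab D x y s h1 h2
end

section
/- (Removal of spikes) Let (Args, ⤳) be the regular AF mined from D and new case N, and let α ∈ D be a spike, i.e. there is no directed path of attacks from α to the default argument. Then the AACBR-predicted outcome for N given D \ {α} equals the predicted outcome given D. -/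
open Classical

/-- A spike: a case of `D` from which there is no directed attack path (within the
arguments of the mined AF) to the default argument. -/
def IsSpike {X : Type*} [PartialOrder X] (D : Set (Case X)) (dflt : Case X) (N : X)
    (a : Case X) : Prop :=
  ¬ Relation.ReflTransGen
      (fun x y => x ∈ minedArgs D dflt ∧ y ∈ minedArgs D dflt ∧
        attack (insert dflt D) N x y)
      (Sum.inl a) (Sum.inl dflt)

/- Only the arguments with an attack path to the default argument matter for whether the default
argument is grounded: membership of such an argument in each approximant `Gseq i` depends only on
its attackers, which again have such a path. The spike `α` is not one of them, and removing it does
not change the attackers of any of them: if removing `α` unblocked an attack `x ⤳ β` on such a `β`,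
a minimal blocker `γ` of that attack in `D` would itself attack `β`, so `γ ≠ α` would lie on a path
to the default and still block `x ⤳ β` without `α`. -/

section Grounded

variable {A : Type*} {Args Args' : Set A} {att att' : A → A → Prop}

theorem Gseq_subset (Args : Set A) (att : A → A → Prop) : ∀ i, Gseq Args att i ⊆ Args
  | 0 => fun _ h => h.1
  | _ + 1 => fun _ h => h.1

theorem mem_Gseq_iff_of_attackers_iff {R : Set A} (hR : R ⊆ Args) (hR' : R ⊆ Args')
    (hclosed : ∀ y ∈ R, ∀ x ∈ Args, att x y → x ∈ R)
    (hattackers : ∀ y ∈ R, ∀ x, x ∈ Args ∧ att x y ↔ x ∈ Args' ∧ att' x y) (i : ℕ) :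
    ∀ y ∈ R, y ∈ Gseq Args att i ↔ y ∈ Gseq Args' att' i := by
  have hforall : ∀ y ∈ R, ∀ P : A → Prop,
      (∀ x ∈ Args, att x y → P x) ↔ ∀ x ∈ Args', att' x y → P x := by
    intro y hy P
    simp only [← and_imp, hattackers y hy]
  induction i with
  | zero =>
    intro y hy
    exact and_congr ⟨fun _ => hR' hy, fun _ => hR hy⟩ (hforall y hy fun _ => False)
  | succ i ih =>
    intro y hy
    refine and_congr ⟨fun _ => hR' hy, fun _ => hR hy⟩ ?_
    rw [hforall y hy]
    refine forall₂_congr fun b hb => imp_congr_right fun hby => ?_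
    obtain ⟨hbA, hbyA⟩ := (hattackers y hy b).2 ⟨hb, hby⟩
    have hbR : b ∈ R := hclosed y hy b hbA hbyA
    constructor
    · rintro ⟨c, hc, hcb⟩
      have hcR := hclosed b hbR c (Gseq_subset Args att i hc) hcb
      exact ⟨c, (ih c hcR).1 hc, ((hattackers b hbR c).1 ⟨Gseq_subset Args att i hc, hcb⟩).2⟩
    · rintro ⟨c, hc, hcb⟩
      have hc' := (hattackers b hbR c).2 ⟨Gseq_subset Args' att' i hc, hcb⟩
      exact ⟨c, (ih c (hclosed b hbR c hc'.1 hc'.2)).2 hc, hc'.2⟩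

theorem mem_grounded_iff_of_attackers_iff {R : Set A} (hR : R ⊆ Args) (hR' : R ⊆ Args')
    (hclosed : ∀ y ∈ R, ∀ x ∈ Args, att x y → x ∈ R)
    (hattackers : ∀ y ∈ R, ∀ x, x ∈ Args ∧ att x y ↔ x ∈ Args' ∧ att' x y) {y : A}
    (hy : y ∈ R) : y ∈ grounded Args att ↔ y ∈ grounded Args' att' := by
  simp only [grounded, Set.mem_iUnion]
  exact exists_congr fun i => mem_Gseq_iff_of_attackers_iff hR hR' hclosed hattackers i y hy

def pathsTo (Args : Set A) (att : A → A → Prop) (t : A) : Set A :=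
  {y | Relation.ReflTransGen (fun x y => x ∈ Args ∧ y ∈ Args ∧ att x y) y t}

theorem pathsTo_subset {t : A} (ht : t ∈ Args) : pathsTo Args att t ⊆ Args := fun _ hy =>
  match hy.cases_head with
  | .inl rfl => ht
  | .inr ⟨_, hstep, _⟩ => hstep.1

theorem mem_pathsTo_of_attack {t x y : A} (ht : t ∈ Args) (hy : y ∈ pathsTo Args att t)
    (hx : x ∈ Args) (hxy : att x y) : x ∈ pathsTo Args att t :=
  Relation.ReflTransGen.head ⟨hx, pathsTo_subset ht hy, hxy⟩ hy

end Grounded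

section Mined

variable {X : Type*}

theorem mem_insert_diff {D : Set (Case X)} {dflt a g : Case X} (hg : g ∈ insert dflt D)
    (hga : g ≠ a) : g ∈ insert dflt (D \ {a}) :=
  hg.imp_right fun h => ⟨h, hga⟩

theorem default_mem_minedArgs (D : Set (Case X)) (dflt : Case X) :
    Sum.inl dflt ∈ minedArgs D dflt :=
  .inl ⟨dflt, .inl rfl, rfl⟩

theorem minedArgs_mono {D D' : Set (Case X)} (h : D' ⊆ D) (dflt : Case X) :
    minedArgs D' dflt ⊆ minedArgs D dflt :=
  Set.union_subset_union_left _ (Set.image_mono (Set.insert_subset_insert h))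

theorem mem_minedArgs_diff {D : Set (Case X)} {dflt a : Case X} {x : Arg X}
    (hx : x ∈ minedArgs D dflt) (hxa : x ≠ .inl a) : x ∈ minedArgs (D \ {a}) dflt := by
  rcases hx with ⟨c, hc, rfl⟩ | hx
  · exact .inl ⟨c, mem_insert_diff hc fun hca => hxa (congrArg _ hca), rfl⟩
  · exact .inr hx

variable [PartialOrder X]

theorem caseAttacks_of_subset {CB CB' : Set (Case X)} (h : CB' ⊆ CB) {b c : Case X}
    (hbc : caseAttacks CB b c) : caseAttacks CB' b c :=
  ⟨hbc.1, hbc.2.1, fun ⟨g, hg, hgb⟩ => hbc.2.2 ⟨g, h hg, hgb⟩⟩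

theorem exists_caseAttacks_of_blocked {CB : Set (Case X)} (hfin : CB.Finite) {b c : Case X}
    (hbc : b.2 ≠ c.2) (hblock : ∃ g ∈ CB, g.1 < b.1 ∧ c.1 < g.1 ∧ g.2 = b.2) :
    ∃ g ∈ CB, (g.1 < b.1 ∧ c.1 < g.1 ∧ g.2 = b.2) ∧ caseAttacks CB g c := by
  set S := {g ∈ CB | g.1 < b.1 ∧ c.1 < g.1 ∧ g.2 = b.2}
  obtain ⟨g, ⟨hgCB, hgb, hcg, hg2⟩, hgmin⟩ :=
    (hfin.subset (Set.sep_subset CB _)).exists_minimalFor (fun g : Case X => g.1) S hblock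
  refine ⟨g, hgCB, ⟨hgb, hcg, hg2⟩, hg2 ▸ hbc, hcg.le, fun ⟨h, hh, hhg, hch, hh2⟩ => ?_⟩
  have hhS : h ∈ S := ⟨hh, hhg.trans hgb, hch, hh2.trans hg2⟩
  exact (hgmin hhS hhg.le).not_gt hhg

theorem caseAttacks_of_attackers_mem {CB CB' : Set (Case X)} (hfin : CB.Finite) {b c : Case X}
    (hc : ∀ g ∈ CB, caseAttacks CB g c → g ∈ CB') (hbc : caseAttacks CB' b c) :
    caseAttacks CB b c := by
  refine ⟨hbc.1, hbc.2.1, fun hblock => ?_⟩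
  obtain ⟨g, hgCB, hgb, hgc⟩ := exists_caseAttacks_of_blocked hfin hbc.1 hblock
  exact hbc.2.2 ⟨g, hc g hgCB hgc, hgb⟩

theorem attack_of_subset {CB CB' : Set (Case X)} (h : CB' ⊆ CB) {N : X} :
    ∀ {x y : Arg X}, attack CB N x y → attack CB' N x y
  | .inl _, .inl _, hxy => caseAttacks_of_subset h hxy
  | .inr _, .inl _, hxy => hxy

theorem attack_iff_of_attackers_mem {CB CB' : Set (Case X)} (hfin : CB.Finite) (h : CB' ⊆ CB)
    {N : X} {c : Case X} (hc : ∀ g ∈ CB, caseAttacks CB g c → g ∈ CB') :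
    ∀ x : Arg X, attack CB' N x (.inl c) ↔ attack CB N x (.inl c)
  | .inl _ => ⟨caseAttacks_of_attackers_mem hfin hc, caseAttacks_of_subset h⟩
  | .inr _ => Iff.rfl

theorem IsSpike.ne_of_mem_pathsTo {D : Set (Case X)} {dflt a : Case X} {N : X}
    (hspike : IsSpike D dflt N a) {y : Arg X}
    (hy : y ∈ pathsTo (minedArgs D dflt) (attack (insert dflt D) N) (.inl dflt)) :
    y ≠ .inl a := by
  rintro rfl
  exact hspike hy

theorem IsSpike.attackers_iff {D : Set (Case X)} (hfin : D.Finite) {dflt a : Case X} {N : X}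
    (hspike : IsSpike D dflt N a) {y : Arg X}
    (hy : y ∈ pathsTo (minedArgs D dflt) (attack (insert dflt D) N) (.inl dflt)) (x : Arg X) :
    x ∈ minedArgs D dflt ∧ attack (insert dflt D) N x y ↔
      x ∈ minedArgs (D \ {a}) dflt ∧ attack (insert dflt (D \ {a})) N x y := by
  have hdA := default_mem_minedArgs D dflt
  have hsub : insert dflt (D \ {a}) ⊆ insert dflt D := Set.insert_subset_insert Set.sdiff_subset
  constructor
  · rintro ⟨hx, hxy⟩
    have hxR := mem_pathsTo_of_attack hdA hy hx hxy
    exact ⟨mem_minedArgs_diff hx (hspike.ne_of_mem_pathsTo hxR), attack_of_subset hsub hxy⟩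
  · rintro ⟨hx, hxy⟩
    refine ⟨minedArgs_mono Set.sdiff_subset dflt hx, ?_⟩
    obtain ⟨c⟩ | ⟨⟩ := y
    · refine (attack_iff_of_attackers_mem (hfin.insert dflt) hsub (fun g hg hgc => ?_) x).1 hxy
      have hgR := mem_pathsTo_of_attack (att := attack (insert dflt D) N) hdA hy
        (.inl ⟨g, hg, rfl⟩) hgc
      exact mem_insert_diff hg fun hga => hspike.ne_of_mem_pathsTo hgR (congrArg _ hga)
    · cases x <;> exact hxy.elim

end Mined

theorem spike_removal_preserves_outcome_general {X : Type*} [PartialOrder X]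
    (D : Set (Case X)) (hfin : D.Finite)
    (dflt : Case X) (N : X)
    (a : Case X) (hspike : IsSpike D dflt N a) :
    aacbrOutcome (D \ {a}) dflt N = aacbrOutcome D dflt N := by
  have hdA := default_mem_minedArgs D dflt
  have hgrounded := mem_grounded_iff_of_attackers_iff (pathsTo_subset hdA)
    (fun y hy => mem_minedArgs_diff (pathsTo_subset hdA hy) (hspike.ne_of_mem_pathsTo hy))
    (fun y hy x hx hxy => mem_pathsTo_of_attack hdA hy hx hxy)
    (fun y hy => hspike.attackers_iff hfin hy) Relation.ReflTransGen.refl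
  exact if_congr hgrounded.symm rfl rfl

/-- Removal of spikes: if `α ∈ D` is a spike of the regular AF mined from `D` and new
case `N`, then the AACBR-predicted outcome for `N` given `D \ {α}` equals the one
given `D`. -/
theorem spike_removal_preserves_outcome {X : Type*} [PartialOrder X]
    (D : Set (Case X)) (hfin : D.Finite)
    (dflt : Case X) (hd : ∀ x : X, dflt.1 ≤ x) (N : X)
    (a : Case X) (ha : a ∈ D) (hspike : IsSpike D dflt N a) :
    aacbrOutcome (D \ {a}) dflt N = aacbrOutcome D dflt N :=
  spike_removal_preserves_outcome_general D hfin dflt N a hspike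
end
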